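/- arXiv:1310.2978 — 5 statements merged into one kernel-verified Lean document; each statement's English description precedes it below -/
import Mathlib

section
/- Let H be a group, let x ∈ H be an involution (x² = 1 and x ≠ 1), and let w ∈ H. If the commutator ⁅x,w⁆ has finite odd order 2k+1, then the element w·⁅x,w⁆^k commutes with x. -/
/-- Bray's involution-centralizer theorem, odd-order case: if `x` is an involution
and the commutator `⁅x,w⁆ = x⁻¹w⁻¹xw` has finite odd order `2k+1`, then
`w·⁅x,w⁆^k` commutes with `x`. -/
theorem bray_odd_case {H : Type*} [Group H] (x w : H)
    (hx2 : x ^ 2 = 1) (hx1 : x ≠ 1)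
    (k : ℕ) (hord : orderOf (x⁻¹ * w⁻¹ * x * w) = 2 * k + 1) :
    Commute x (w * (x⁻¹ * w⁻¹ * x * w) ^ k) := by
  have hxx : x * x = 1 := by rw [← sq]; exact hx2
  have hx : x⁻¹ = x := inv_eq_of_mul_eq_one_right hxx
  have hxx2 : ∀ t : H, x * (x * t) = t := fun t => by rw [← mul_assoc, hxx, one_mul]
  have hconj : x * (x⁻¹ * w⁻¹ * x * w) * x = (x⁻¹ * w⁻¹ * x * w)⁻¹ := by
    rw [hx, eq_inv_iff_mul_eq_one]
    simp [mul_assoc, hxx2, hxx]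
  have hxw : x * w = w * (x * (x⁻¹ * w⁻¹ * x * w)) := by group
  generalize hgen : x⁻¹ * w⁻¹ * x * w = c at *
  have h1 : c ^ (2 * k + 1) = 1 := by rw [← hord]; exact pow_orderOf_eq_one _
  have haux : ∀ n, x * c ^ n * x = c⁻¹ ^ n := by
    intro n
    induction n with
    | zero => simpa using hxx
    | succ n ih =>
      rw [pow_succ, pow_succ, ← ih, ← hconj,
        show x * c ^ n * x * (x * c * x) = x * c ^ n * (x * x) * c * x by group, hxx]
      group
  have hck : x * c ^ (k + 1) * x = c ^ k := by
    rw [haux, inv_pow, inv_eq_iff_mul_eq_one, ← pow_add,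
      show k + 1 + k = 2 * k + 1 by ring]
    exact h1
  have hstep : x * c ^ (k + 1) = c ^ k * x := by
    conv_rhs => rw [← hck]
    rw [mul_assoc, hxx, mul_one]
  unfold Commute SemiconjBy
  calc x * (w * c ^ k) = (x * w) * c ^ k := by group
    _ = w * (x * c ^ (k + 1)) := by rw [hxw, pow_succ']; group
    _ = w * (c ^ k * x) := by rw [hstep]
    _ = w * c ^ k * x := by group
end

section
/- Let H be a group, let x ∈ H be an involution (x² = 1 and x ≠ 1), and let w ∈ H. If the commutator ⁅x,w⁆ has finite even order 2k, then both ⁅x,w⁆^k and ⁅x,w⁻¹⁆^k commute with x. -/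
/-- If `x` inverts `c` by conjugation and `c ^ (2*k) = 1`, then `x` commutes with `c ^ k`. -/
lemma bray_aux {H : Type*} [Group H] (x c : H)
    (hconj : x⁻¹ * c * x = c⁻¹) (hc : c ^ (2 * k) = 1) :
    Commute x (c ^ k) := by
  have h2 : (c ^ k) * (c ^ k) = 1 := by
    rw [← pow_add, ← two_mul, hc]
  have hinv : (c ^ k)⁻¹ = c ^ k := inv_eq_of_mul_eq_one_left h2
  have hconjk : x⁻¹ * c ^ k * x = (c ^ k)⁻¹ := by
    have : x⁻¹ * c ^ k * x = (x⁻¹ * c * (x⁻¹)⁻¹) ^ k := by rw [conj_pow]; group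
    rw [this, inv_inv, hconj, inv_pow]
  have : x⁻¹ * c ^ k * x = c ^ k := by rw [hconjk, hinv]
  unfold Commute SemiconjBy
  calc x * c ^ k = x * (x⁻¹ * c ^ k * x) := by rw [this]
    _ = c ^ k * x := by group

/-- Bray's involution-centralizer theorem, even-order case: if `x` is an involution
and the commutator `⁅x,w⁆ = x⁻¹w⁻¹xw` has finite even order `2k`, then both
`⁅x,w⁆^k` and `⁅x,w⁻¹⁆^k` commute with `x`. -/
theorem bray_even_case {H : Type*} [Group H] (x w : H)
    (hx2 : x ^ 2 = 1) (hx1 : x ≠ 1)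
    (k : ℕ) (hk : 0 < k) (hord : orderOf (x⁻¹ * w⁻¹ * x * w) = 2 * k) :
    Commute x ((x⁻¹ * w⁻¹ * x * w) ^ k) ∧
    Commute x ((x⁻¹ * w * x * w⁻¹) ^ k) := by
  set c := x⁻¹ * w⁻¹ * x * w with hc
  set d := x⁻¹ * w * x * w⁻¹ with hd
  have hxinv : x⁻¹ = x := by
    rw [pow_two] at hx2
    exact inv_eq_of_mul_eq_one_left hx2
  have hc2k : c ^ (2 * k) = 1 := by rw [← hord]; exact pow_orderOf_eq_one c
  have hdc : d = w * c⁻¹ * w⁻¹ := by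
    rw [hc, hd]; group
  have hd2k : d ^ (2 * k) = 1 := by
    have : (w * c⁻¹ * w⁻¹) ^ (2 * k) = w * (c⁻¹) ^ (2 * k) * w⁻¹ := conj_pow
    rw [hdc, this, inv_pow, hc2k]
    group
  have hxx : x * x = 1 := by rw [← sq]; exact hx2
  constructor
  · apply bray_aux
    · simp only [hc, hxinv, mul_inv_rev, inv_inv, mul_assoc]
      rw [← mul_assoc x x, hxx, one_mul]
    · exact hc2k
  · apply bray_aux
    · simp only [hd, hxinv, mul_inv_rev, inv_inv, mul_assoc]
      rw [← mul_assoc x x, hxx, one_mul]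
    · exact hd2k
end

section
/- Let H be a finite group and let x ∈ H be an involution (x² = 1 and x ≠ 1). Let S = {w ∈ H : ⁅x,w⁆ has odd order}, and for w ∈ S define f(w) = w·⁅x,w⁆^((n−1)/2) where n is the order of ⁅x,w⁆. Then f(w) lies in the centralizer C_H(x) for every w ∈ S, and for every c ∈ C_H(x) the fiber {w ∈ S : f(w) = c} has exactly |S|/|C_H(x)| elements; equivalently, |{w ∈ S : f(w) = c}| · |C_H(x)| = |S| for every c ∈ C_H(x). -/
/-!
Write `a = x⁻¹w⁻¹xw`. Since `x` is an involution, `x` inverts `a` and `xw = wxa`;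
if `a` has order `2k + 1`, then `a⁻ᵏ⁻¹ = aᵏ`, so `x · waᵏ = wxaᵏ⁺¹ = wa⁻ᵏ⁻¹x = waᵏ · x`.
For `z ∈ C_H(x)` the commutator of `x` with `zw` equals that with `w`, so the map is
`C_H(x)`-equivariant for left multiplication: left translation by `dc⁻¹` carries the fiber
over `c` onto the fiber over `d`, and the `|C_H(x)|` fibers partition the domain.
-/

open Finset

section Counting

variable {H : Type*} [Group H] [DecidableEq H] {K : Subgroup H} {S : Finset H} {f : H → H}

theorem card_filter_eq_of_mul_left_equivariant (hS : ∀ z ∈ K, ∀ w ∈ S, z * w ∈ S)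
    (hf : ∀ z ∈ K, ∀ w ∈ S, f (z * w) = z * f w) {c d : H} (hc : c ∈ K) (hd : d ∈ K) :
    #{w ∈ S | f w = c} = #{w ∈ S | f w = d} := by
  have maps_to : ∀ {u v : H}, u ∈ K → v ∈ K →
      Set.MapsTo (v * u⁻¹ * ·) ({w ∈ S | f w = u} : Finset H)
        ({w ∈ S | f w = v} : Finset H) := by
    intro u v hu hv w hw
    have hvu : v * u⁻¹ ∈ K := mul_mem hv (inv_mem hu)
    simp only [mem_coe, mem_filter] at hw ⊢
    refine ⟨hS _ hvu w hw.1, ?_⟩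
    rw [hf _ hvu w hw.1, hw.2, inv_mul_cancel_right]
  exact card_nbij' _ _ (maps_to hc hd) (maps_to hd hc) (fun _ _ ↦ by group)
    (fun _ _ ↦ by group)

theorem card_filter_eq_mul_card_of_mul_left_equivariant [Fintype H]
    (hS : ∀ z ∈ K, ∀ w ∈ S, z * w ∈ S) (hf : ∀ z ∈ K, ∀ w ∈ S, f (z * w) = z * f w)
    (hfK : ∀ w ∈ S, f w ∈ K) {c : H} (hc : c ∈ K) :
    #{w ∈ S | f w = c} * Nat.card K = #S := by
  classical
  have hK : Nat.card K = #(K : Set H).toFinset := Nat.card_eq_card_toFinset (K : Set H)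
  have partition : #S = ∑ d ∈ (K : Set H).toFinset, #{w ∈ S | f w = d} :=
    card_eq_sum_card_fiberwise fun w hw ↦ by simpa using hfK w hw
  rw [partition, sum_const_nat fun d hd ↦
    card_filter_eq_of_mul_left_equivariant hS hf (by simpa using hd) hc, hK, mul_comm]

end Counting

section Bray

variable {H : Type*} [Group H] {x w : H}

theorem commutator_mul_left_of_commute {z : H} (hz : Commute x z) :
    x⁻¹ * (z * w)⁻¹ * x * (z * w) = x⁻¹ * w⁻¹ * x * w := by
  have cancel_z : z⁻¹ * (x * (z * w)) = x * w := by
    rw [← mul_assoc x, hz.eq, mul_assoc, inv_mul_cancel_left]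
  simp only [mul_inv_rev, mul_assoc, cancel_z]

theorem commute_mul_commutator_pow (hx : x ^ 2 = 1) {k : ℕ}
    (hk : (x⁻¹ * w⁻¹ * x * w) ^ (2 * k + 1) = 1) :
    Commute x (w * (x⁻¹ * w⁻¹ * x * w) ^ k) := by
  set a := x⁻¹ * w⁻¹ * x * w
  have hx_inv : x⁻¹ = x := inv_eq_of_mul_eq_one_right (by rw [← sq, hx])
  have x_mul : x * w = w * x * a := by simp only [a]; group
  have x_inverts_a : SemiconjBy x a a⁻¹ := by
    calc x * a = w⁻¹ * x * w := by simp only [a]; group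
      _ = w⁻¹ * x⁻¹ * w * x * x := by rw [hx_inv, mul_assoc _ x x, ← sq, hx, mul_one]
      _ = a⁻¹ * x := by simp only [a]; group
  have pow_inv : (a ^ (k + 1))⁻¹ = a ^ k :=
    inv_eq_of_mul_eq_one_left (by rw [← pow_add, show k + (k + 1) = 2 * k + 1 by omega, hk])
  calc x * (w * a ^ k) = w * (x * a ^ (k + 1)) := by rw [← mul_assoc, x_mul, pow_succ']; group
    _ = w * (a ^ k * x) := by rw [(x_inverts_a.pow_right (k + 1)).eq, inv_pow, pow_inv]
    _ = w * a ^ k * x := (mul_assoc ..).symm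

noncomputable def brayMap (x w : H) : H :=
  w * (x⁻¹ * w⁻¹ * x * w) ^ ((orderOf (x⁻¹ * w⁻¹ * x * w) - 1) / 2)

theorem brayMap_mem_centralizer (hx : x ^ 2 = 1) (hw : Odd (orderOf (x⁻¹ * w⁻¹ * x * w))) :
    brayMap x w ∈ Subgroup.centralizer {x} := by
  obtain ⟨k, hk⟩ := hw
  have half : (orderOf (x⁻¹ * w⁻¹ * x * w) - 1) / 2 = k := by omega
  rw [Subgroup.mem_centralizer_singleton_iff, brayMap, half]
  exact (commute_mul_commutator_pow hx (hk ▸ pow_orderOf_eq_one _)).symm.eq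

theorem brayMap_mul_left {z : H} (hz : Commute x z) : brayMap x (z * w) = z * brayMap x w := by
  rw [brayMap, brayMap, commutator_mul_left_of_commute hz, mul_assoc]

end Bray

theorem bray_uniform_general {H : Type*} [Group H] [Fintype H] [DecidableEq H]
    (x : H) (hx2 : x ^ 2 = 1) :
    (∀ w ∈ Finset.univ.filter (fun w : H => Odd (orderOf (x⁻¹ * w⁻¹ * x * w))),
      w * (x⁻¹ * w⁻¹ * x * w) ^ ((orderOf (x⁻¹ * w⁻¹ * x * w) - 1) / 2) ∈
        Subgroup.centralizer {x}) ∧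
    (∀ c ∈ Subgroup.centralizer ({x} : Set H),
      ((Finset.univ.filter (fun w : H => Odd (orderOf (x⁻¹ * w⁻¹ * x * w)))).filter
          (fun w => w * (x⁻¹ * w⁻¹ * x * w) ^ ((orderOf (x⁻¹ * w⁻¹ * x * w) - 1) / 2) = c)).card *
        Nat.card (Subgroup.centralizer ({x} : Set H)) =
      (Finset.univ.filter (fun w : H => Odd (orderOf (x⁻¹ * w⁻¹ * x * w)))).card) := by
  have maps_to : ∀ w ∈ Finset.univ.filter (fun w : H => Odd (orderOf (x⁻¹ * w⁻¹ * x * w))),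
      brayMap x w ∈ Subgroup.centralizer {x} :=
    fun w hw ↦ brayMap_mem_centralizer hx2 (mem_filter.1 hw).2
  refine ⟨maps_to, fun c hc ↦ card_filter_eq_mul_card_of_mul_left_equivariant ?_ ?_ maps_to hc⟩
  · intro z hz w hw
    simpa only [mem_filter, mem_univ, true_and,
      commutator_mul_left_of_commute (Subgroup.mem_centralizer_singleton_iff.1 hz).symm] using hw
  · exact fun z hz w _ ↦ brayMap_mul_left (Subgroup.mem_centralizer_singleton_iff.1 hz).symm

/-- Bray's involution-centralizer theorem, uniform-distribution statement:
for an involution `x` in a finite group `H`, the map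
`w ↦ w·⁅x,w⁆^((n-1)/2)` (where `n = orderOf ⁅x,w⁆`), defined on the set `S` of
elements `w` for which `⁅x,w⁆ = x⁻¹w⁻¹xw` has odd order, takes values in the
centralizer `C_H(x)`, and each fiber over an element of `C_H(x)` has exactly
`|S|/|C_H(x)|` elements. -/
theorem bray_uniform {H : Type*} [Group H] [Fintype H] [DecidableEq H]
    (x : H) (hx2 : x ^ 2 = 1) (hx1 : x ≠ 1) :
    (∀ w ∈ Finset.univ.filter (fun w : H => Odd (orderOf (x⁻¹ * w⁻¹ * x * w))),
      w * (x⁻¹ * w⁻¹ * x * w) ^ ((orderOf (x⁻¹ * w⁻¹ * x * w) - 1) / 2) ∈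
        Subgroup.centralizer {x}) ∧
    (∀ c ∈ Subgroup.centralizer ({x} : Set H),
      ((Finset.univ.filter (fun w : H => Odd (orderOf (x⁻¹ * w⁻¹ * x * w)))).filter
          (fun w => w * (x⁻¹ * w⁻¹ * x * w) ^ ((orderOf (x⁻¹ * w⁻¹ * x * w) - 1) / 2) = c)).card *
        Nat.card (Subgroup.centralizer ({x} : Set H)) =
      (Finset.univ.filter (fun w : H => Odd (orderOf (x⁻¹ * w⁻¹ * x * w)))).card) :=
  bray_uniform_general x hx2
end

section
/- Let K be a group, let M be a normal subgroup of K in which every element squares to the identity, and let H be a subgroup of K with H ∩ M = 1 and HM = K. Suppose h ∈ H has odd order n and conjugation by h fixes no nontrivial element of M (for m ∈ M, h⁻¹mh = m implies m = 1). If k = a·m where a ∈ H commutes with h and m ∈ M, then a = h·k·(h·(k⁻¹hk))^((n−1)/2). -/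
/-- The "Formula" (Lemma 2.8): `K = H ⋉ M` with `M` normal of exponent 2,
`h ∈ H` of odd order `n` acting fixed-point-freely on `M` by conjugation.
If `k = a·m` with `a ∈ H` commuting with `h` and `m ∈ M`, then
`a = h·k·(h·(k⁻¹hk))^((n-1)/2)`. -/
theorem the_formula {K : Type*} [Group K]
    (M H : Subgroup K) [M.Normal]
    (hM2 : ∀ m ∈ M, m * m = 1)
    (hinf : H ⊓ M = ⊥)
    (hgen : ∀ k : K, ∃ a ∈ H, ∃ m ∈ M, k = a * m)
    (h : K) (hh : h ∈ H)
    (n : ℕ) (hn : orderOf h = n) (hodd : Odd n)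
    (hfpf : ∀ m ∈ M, h⁻¹ * m * h = m → m = 1)
    (k a m : K) (ha : a ∈ H) (hm : m ∈ M)
    (hcomm : a * h = h * a) (hk : k = a * m) :
    a = h * k * (h * (k⁻¹ * h * k)) ^ ((n - 1) / 2) := by
  have hminv : m⁻¹ = m := inv_eq_of_mul_eq_one_right (hM2 m hm)
  -- M is abelian
  have hMab : ∀ x ∈ M, ∀ y ∈ M, x * y = y * x := by
    intro x hx y hy
    have h3 : (x * y)⁻¹ = x * y := inv_eq_of_mul_eq_one_right (hM2 _ (M.mul_mem hx hy))
    calc x * y = (x * y)⁻¹ := h3.symm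
      _ = y⁻¹ * x⁻¹ := mul_inv_rev x y
      _ = y * x := by
          rw [inv_eq_of_mul_eq_one_right (hM2 y hy), inv_eq_of_mul_eq_one_right (hM2 x hx)]
  have hhn : h ^ n = 1 := hn ▸ pow_orderOf_eq_one h
  -- conjugation distributes over powers
  have key : ∀ (x g : K) (j : ℕ), g⁻¹ * x ^ j * g = (g⁻¹ * x * g) ^ j := by
    intro x g j
    induction j with
    | zero => simp
    | succ i ih => rw [pow_succ, pow_succ, ← ih]; group
  -- (h*m)^n ∈ M
  have hPM : (h * m) ^ n ∈ M := by
    rw [← QuotientGroup.eq_one_iff]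
    have : (QuotientGroup.mk' M) ((h * m) ^ n) = 1 := by
      rw [map_pow, map_mul, show (QuotientGroup.mk' M) m = 1 from
        (QuotientGroup.eq_one_iff m).mpr hm, mul_one, ← map_pow, hhn, map_one]
    exact this
  -- (h*m)^n is fixed by conjugation by h
  have hconj : h⁻¹ * (h * m) ^ n * h = (h * m) ^ n := by
    have k2 := key (h * m) m⁻¹ n
    rw [inv_inv] at k2
    calc h⁻¹ * (h * m) ^ n * h = (h⁻¹ * (h * m) * h) ^ n := key _ _ _
      _ = (m * (h * m) * m⁻¹) ^ n := by
          rw [show h⁻¹ * (h * m) * h = m * (h * m) * m⁻¹ by group]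
      _ = m * (h * m) ^ n * m⁻¹ := k2.symm
      _ = (h * m) ^ n := by rw [hMab m hm _ hPM]; group
  have hP1 : (h * m) ^ n = 1 := hfpf _ hPM hconj
  -- compute the RHS
  have haha : a⁻¹ * h * a = h := by rw [mul_assoc, ← hcomm]; group
  have hk1 : k⁻¹ * h * k = m * h * m := by
    rw [hk, mul_inv_rev]
    calc m⁻¹ * a⁻¹ * h * (a * m) = m⁻¹ * (a⁻¹ * h * a) * m := by group
      _ = m * h * m := by rw [haha, hminv]
  obtain ⟨t, ht⟩ := hodd
  have hdiv : (n - 1) / 2 = t := by omega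
  rw [hk1, hdiv, hk]
  have e2 : h * (m * h * m) = (h * m) ^ 2 := by rw [pow_two]; group
  rw [e2, ← pow_mul]
  have e3 : h * (a * m) = a * (h * m) := by rw [← mul_assoc, ← hcomm]; group
  rw [e3, mul_assoc, ← pow_succ']
  rw [show 2 * t + 1 = n by omega, hP1, mul_one]
end

section
/- Let K be a finite group, let M be a normal subgroup of K in which every element squares to the identity, and let H be a subgroup of K with H ∩ M = 1 and HM = K. Suppose h ∈ H lies in the centre of H, has odd order n, and conjugation by h fixes no nontrivial element of M (for m ∈ M, h⁻¹mh = m implies m = 1). Define f : K → K by f(k) = h·k·(h·(k⁻¹hk))^((n−1)/2). Then f(k) ∈ H for every k ∈ K, and for every a ∈ H the fiber {k ∈ K : f(k) = a} has exactly |M| elements. -/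
/-- Consequence of the "Formula" (Lemma 2.8 and ensuing remark): `K = H ⋉ M`
finite, `M` normal of exponent 2, `h` a central element of `H` of odd order `n`
acting fixed-point-freely on `M`. The map `f(k) = h·k·(h·(k⁻¹hk))^((n-1)/2)`
takes values in `H`, and each fiber over an element of `H` has exactly `|M|`
elements (so `f(k)` is uniform over `H` for uniform `k ∈ K`). -/
theorem formula_uniform {K : Type*} [Group K] [Fintype K]
    (M H : Subgroup K) [M.Normal]
    (hM2 : ∀ m ∈ M, m * m = 1)
    (hinf : H ⊓ M = ⊥)
    (hgen : ∀ k : K, ∃ a ∈ H, ∃ m ∈ M, k = a * m)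
    (h : K) (hh : h ∈ H) (hcen : ∀ a ∈ H, a * h = h * a)
    (n : ℕ) (hn : orderOf h = n) (hodd : Odd n)
    (hfpf : ∀ m ∈ M, h⁻¹ * m * h = m → m = 1) :
    (∀ k : K, h * k * (h * (k⁻¹ * h * k)) ^ ((n - 1) / 2) ∈ H) ∧
    (∀ a ∈ H,
      Nat.card {k : K // h * k * (h * (k⁻¹ * h * k)) ^ ((n - 1) / 2) = a} =
        Nat.card M) := by
  have hminv : ∀ m ∈ M, m⁻¹ = m := by
    intro m hm
    rw [inv_eq_iff_mul_eq_one]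
    exact hM2 m hm
  have hMab : ∀ m ∈ M, ∀ m' ∈ M, m * m' = m' * m := by
    intro m hm m' hm'
    have h1 : (m * m')⁻¹ = m * m' := hminv _ (mul_mem hm hm')
    calc m * m' = (m * m')⁻¹ := h1.symm
      _ = m'⁻¹ * m⁻¹ := by rw [mul_inv_rev]
      _ = m' * m := by rw [hminv m hm, hminv m' hm']
  have hpow : h ^ n = 1 := by rw [← hn]; exact pow_orderOf_eq_one h
  -- key: (h*m)^n = 1 for m ∈ M
  have key : ∀ m ∈ M, (h * m) ^ n = 1 := by
    intro m hm
    have hmem : (h * m) ^ n ∈ M := by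
      have hq : (QuotientGroup.mk ((h * m) ^ n) : K ⧸ M) = 1 := by
        have hm1 : (QuotientGroup.mk m : K ⧸ M) = 1 :=
          (QuotientGroup.eq_one_iff m).mpr hm
        have : (QuotientGroup.mk ((h * m) ^ n) : K ⧸ M)
            = ((QuotientGroup.mk h : K ⧸ M) * QuotientGroup.mk m) ^ n := by
          simp [QuotientGroup.mk_mul, QuotientGroup.mk_pow]
        rw [this, hm1, mul_one, ← QuotientGroup.mk_pow, hpow]
        simp
      exact (QuotientGroup.eq_one_iff _).mp hq
    apply hfpf _ hmem
    have hc : h⁻¹ * (h * m) ^ n * h = (m * h) ^ n := by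
      have h4 : m * h = h⁻¹ * (h * m) * h⁻¹⁻¹ := by group
      rw [h4, conj_pow, inv_inv]
    have h3 : m * h = m * (h * m) * m⁻¹ := by group
    rw [hc, h3, conj_pow, hminv m hm,
      show m * (h * m) ^ n = (h * m) ^ n * m from hMab m hm _ hmem,
      mul_assoc, hM2 m hm, mul_one]
  -- main computation : f (a * m) = a
  have main : ∀ a ∈ H, ∀ m ∈ M,
      h * (a * m) * (h * ((a * m)⁻¹ * h * (a * m))) ^ ((n - 1) / 2) = a := by
    intro a ha m hm
    have hconj : (a * m)⁻¹ * h * (a * m) = m * h * m := by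
      have : a⁻¹ * h * a = h := by
        rw [mul_assoc, ← hcen a ha]; group
      rw [mul_inv_rev, hminv m hm]
      calc m * a⁻¹ * h * (a * m) = m * (a⁻¹ * h * a) * m := by group
        _ = m * h * m := by rw [this]
    have hsq : h * (m * h * m) = (h * m) ^ 2 := by rw [sq]; group
    have hhalf : 2 * ((n - 1) / 2) = n - 1 := by
      obtain ⟨j, hj⟩ := hodd
      omega
    have hpow2 : (h * (a * m)⁻¹ * h * (a * m)) = (h * (a * m)⁻¹ * h * (a * m)) := rfl
    rw [hconj, hsq, ← pow_mul, hhalf]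
    have hn1 : n - 1 + 1 = n := by
      obtain ⟨j, hj⟩ := hodd; omega
    calc h * (a * m) * (h * m) ^ (n - 1)
        = a * h * m * (h * m) ^ (n - 1) := by
          rw [← mul_assoc h a m, ← hcen a ha]
      _ = a * (h * m * (h * m) ^ (n - 1)) := by rw [mul_assoc a h m, mul_assoc]
      _ = a * (h * m) ^ (n - 1 + 1) := by rw [pow_succ']
      _ = a := by rw [hn1, key m hm, mul_one]
  refine ⟨?_, ?_⟩
  · intro k
    obtain ⟨a, ha, m, hm, rfl⟩ := hgen k
    rw [main a ha m hm]
    exact ha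
  · intro a ha
    have hbij : Function.Bijective
        (fun m : M => (⟨a * (m : K), by
          simpa using main a ha m m.2⟩ :
          {k : K // h * k * (h * (k⁻¹ * h * k)) ^ ((n - 1) / 2) = a})) := by
      constructor
      · intro m₁ m₂ hm
        have : a * (m₁ : K) = a * (m₂ : K) := congrArg Subtype.val hm
        exact Subtype.ext (mul_left_cancel this)
      · rintro ⟨k, hk⟩
        obtain ⟨b, hb, m, hm, rfl⟩ := hgen k
        have hba : b = a := by rw [main b hb m hm] at hk; exact hk
        subst hba
        exact ⟨⟨m, hm⟩, rfl⟩
    exact (Nat.card_eq_of_bijective _ hbij).symm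
end
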